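/- arXiv:1307.7671 — 6 statements merged into one kernel-verified Lean document; each statement's English description precedes it below -/
import Mathlib

section
/- Let C1, C3 > 0 and ξ ∈ [C1/C3, 1], and suppose A1 ≤ C1 where F(v) = min(C1, max(A1, C3 - ((1-ξ)/ξ)v)). Then for every initial value v ∈ [0, C1], F(v) = C1. In particular F converges to the fixed point C1 in one step. -/
theorem poincare_finite_time_one_step (C1 C3 ξ A1 : ℝ)
    (hC1 : 0 < C1) (hC3 : 0 < C3)
    (hξlo : C1 / C3 ≤ ξ) (hξhi : ξ ≤ 1) (hξ0 : 0 < ξ)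
    (hA1 : A1 ≤ C1)
    (F : ℝ → ℝ) (hF : ∀ v, F v = min C1 (max A1 (C3 - ((1 - ξ) / ξ) * v))) :
    ∀ v ∈ Set.Icc (0 : ℝ) C1, F v = C1 := by
  intro v hv
  obtain ⟨hv0, hv1⟩ := hv
  have hC1C3 : C1 ≤ ξ * C3 := by
    rw [div_le_iff₀ hC3] at hξlo; linarith
  have hslope : 0 ≤ (1 - ξ) / ξ := div_nonneg (by linarith) hξ0.le
  have hkey : C1 ≤ C3 - ((1 - ξ) / ξ) * v := by
    have h1 : ((1 - ξ) / ξ) * v ≤ ((1 - ξ) / ξ) * C1 :=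
      mul_le_mul_of_nonneg_left hv1 hslope
    have h2 : C1 ≤ C3 - ((1 - ξ) / ξ) * C1 := by
      rw [div_mul_eq_mul_div, le_sub_iff_add_le, ← sub_nonneg]
      have : C3 - (C1 + (1 - ξ) * C1 / ξ) = (ξ * C3 - C1) / ξ := by
        field_simp; ring
      rw [this]
      exact div_nonneg (by linarith) hξ0.le
    linarith
  rw [hF]
  have : C1 ≤ max A1 (C3 - ((1 - ξ) / ξ) * v) := le_max_of_le_right hkey
  exact min_eq_left this
end

section
/- Let C1, C3 > 0, ξ ∈ (1/2, 1) with A1 < ξC3 < C1, and λ = (1-ξ)/ξ (so 0 < λ < 1). Define F(v) = min(C1, max(A1, C3 - λv)). Then v* = ξC3 is the unique solution of F(F(v)) = v in [A1, C1]; i.e., F has no periodic points of period 2. -/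
lemma clamp_lip (a b x y : ℝ) :
    |min a (max b x) - min a (max b y)| ≤ |x - y| := by
  calc |min a (max b x) - min a (max b y)|
      ≤ max |a - a| |max b x - max b y| := abs_min_sub_min_le_max _ _ _ _
    _ = |max b x - max b y| := by simp
    _ ≤ max |b - b| |x - y| := abs_max_sub_max_le_max _ _ _ _
    _ = |x - y| := by simp

theorem poincare_no_period_two_stable (C1 C3 ξ lam A1 : ℝ)
    (hC1 : 0 < C1) (hC3 : 0 < C3) (hξ0 : 1/2 < ξ) (hξ1 : ξ < 1)
    (hA1 : A1 < ξ * C3) (hfp : ξ * C3 < C1) (hlam : lam = (1 - ξ) / ξ)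
    (F : ℝ → ℝ) (hF : ∀ v, F v = min C1 (max A1 (C3 - lam * v))) :
    ∀ v ∈ Set.Icc A1 C1, F (F v) = v → v = ξ * C3 := by
  have hξpos : 0 < ξ := by linarith
  have hlam0 : 0 ≤ lam := by
    rw [hlam]; exact div_nonneg (by linarith) hξpos.le
  have hlam1 : lam < 1 := by
    rw [hlam, div_lt_one hξpos]; linarith
  have hfix : F (ξ * C3) = ξ * C3 := by
    have : C3 - lam * (ξ * C3) = ξ * C3 := by
      rw [hlam]; field_simp; ring
    rw [hF, this, max_eq_right hA1.le, min_eq_right hfp.le]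
  have lip : ∀ x y : ℝ, |F x - F y| ≤ lam * |x - y| := by
    intro x y
    rw [hF, hF]
    calc |min C1 (max A1 (C3 - lam * x)) - min C1 (max A1 (C3 - lam * y))|
        ≤ |(C3 - lam * x) - (C3 - lam * y)| := clamp_lip _ _ _ _
      _ = lam * |x - y| := by
          rw [show (C3 - lam * x) - (C3 - lam * y) = lam * (y - x) by ring,
            abs_mul, abs_of_nonneg hlam0, abs_sub_comm]
  intro v _ hv
  have key : |v - ξ * C3| ≤ lam * (lam * |v - ξ * C3|) := by
    calc |v - ξ * C3| = |F (F v) - F (F (ξ * C3))| := by rw [hv, hfix, hfix]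
      _ ≤ lam * |F v - F (ξ * C3)| := lip _ _
      _ ≤ lam * (lam * |v - ξ * C3|) :=
          mul_le_mul_of_nonneg_left (lip _ _) hlam0
  have hsq : lam * lam < 1 := by nlinarith
  rcases eq_or_lt_of_le (abs_nonneg (v - ξ * C3)) with h0 | hpos
  · have := abs_eq_zero.mp h0.symm; linarith
  · exfalso
    nlinarith [mul_lt_mul_of_pos_right hsq hpos]
end

section
/- Let C1, C3 > 0, ξ ∈ (0, 1/2) with A1 < ξC3 < C1, and λ = (1-ξ)/ξ > 1. Define F(v) = min(C1, max(A1, C3 - λv)), v⁻ = max(A1, C3 - λC1), and v⁺ = min(C1, C3 - λA1). Then v⁻ < ξC3 < v⁺, F(v⁻) = v⁺, and F(v⁺) = v⁻; in particular v⁻ and v⁺ are periodic points of period 2. -/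
theorem poincare_period_two_cycle (C1 C3 ξ lam A1 : ℝ)
    (hC1 : 0 < C1) (hC3 : 0 < C3) (hξ0 : 0 < ξ) (hξ1 : ξ < 1/2)
    (hA1 : A1 < ξ * C3) (hfp : ξ * C3 < C1) (hlam : lam = (1 - ξ) / ξ)
    (hlam1 : 1 < lam)
    (F : ℝ → ℝ) (hF : ∀ v, F v = min C1 (max A1 (C3 - lam * v)))
    (vm vp : ℝ) (hvm : vm = max A1 (C3 - lam * C1))
    (hvp : vp = min C1 (C3 - lam * A1)) :
    vm < ξ * C3 ∧ ξ * C3 < vp ∧ F vm = vp ∧ F vp = vm := by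
  have hξ : ξ ≠ 0 := ne_of_gt hξ0
  have hl : lam * ξ = 1 - ξ := by rw [hlam]; field_simp
  have hl0 : 0 < lam := lt_trans one_pos hlam1
  -- fixed point: C3 - lam * (ξ * C3) = ξ * C3
  have hfix : C3 - lam * (ξ * C3) = ξ * C3 := by nlinarith [hl]
  have h1 : vm < ξ * C3 := by
    rw [hvm]
    apply max_lt hA1
    nlinarith
  have h2 : ξ * C3 < vp := by
    rw [hvp]
    apply lt_min hfp
    nlinarith
  have hC3C1 : C3 ≤ (lam + 1) * C1 := by nlinarith
  have hA1C3 : (lam + 1) * A1 ≤ C3 := by nlinarith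
  refine ⟨h1, h2, ?_, ?_⟩
  · rw [hF, hvm, hvp]
    rcases le_total A1 (C3 - lam * C1) with h | h
    · rw [max_eq_right h]
      have hge : C1 ≤ C3 - lam * (C3 - lam * C1) := by nlinarith
      have hgeA : A1 ≤ C3 - lam * (C3 - lam * C1) := by nlinarith
      rw [max_eq_right hgeA, min_eq_left hge, min_eq_left]
      nlinarith
    · rw [max_eq_left h]
      have : A1 ≤ C3 - lam * A1 := by nlinarith
      rw [max_eq_right this]
  · rw [hF, hvp, hvm]
    rcases le_total (C3 - lam * A1) C1 with h | h
    · rw [min_eq_right h]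
      have hle : C3 - lam * (C3 - lam * A1) ≤ A1 := by nlinarith
      have hle2 : C3 - lam * C1 ≤ A1 := by nlinarith
      rw [max_eq_left hle, max_eq_left hle2, min_eq_right]
      nlinarith
    · rw [min_eq_left h]
      rw [min_eq_right]
      calc max A1 (C3 - lam * C1) = vm := hvm.symm
        _ ≤ C1 := by linarith
end

section
/- Let C1, C3 > 0, ξ ∈ (0, 1/2) with A1 < ξC3 < C1, λ = (1-ξ)/ξ > 1, F(v) = min(C1, max(A1, C3 - λv)), v⁻ = max(A1, C3 - λC1), v⁺ = min(C1, C3 - λA1), and v* = ξC3. Then every solution of F²(v) = v in [A1, C1] is one of v⁻, v*, v⁺. -/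
theorem poincare_period_two_unique (C1 C3 ξ lam A1 : ℝ)
    (hC1 : 0 < C1) (hC3 : 0 < C3) (hξ0 : 0 < ξ) (hξ1 : ξ < 1/2)
    (hA1 : A1 < ξ * C3) (hfp : ξ * C3 < C1) (hlam : lam = (1 - ξ) / ξ)
    (hlam1 : 1 < lam)
    (F : ℝ → ℝ) (hF : ∀ v, F v = min C1 (max A1 (C3 - lam * v)))
    (vm vp vstar : ℝ) (hvm : vm = max A1 (C3 - lam * C1))
    (hvp : vp = min C1 (C3 - lam * A1)) (hvs : vstar = ξ * C3) :
    ∀ v ∈ Set.Icc A1 C1, F (F v) = v → v = vm ∨ v = vstar ∨ v = vp := by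
  have hlam0 : 0 < lam := lt_trans one_pos hlam1
  have hξl : ξ * lam = 1 - ξ := by
    rw [hlam]; field_simp
  have hA1C1 : A1 ≤ C1 := le_of_lt (lt_trans hA1 hfp)
  intro v hv hfix
  obtain ⟨hv1, hv2⟩ := hv
  set w := C3 - lam * v with hw
  rcases le_or_gt C1 w with h1 | h1
  · -- F v = C1, F C1 = vm
    have hFv : F v = C1 := by
      rw [hF, min_eq_left]; exact le_max_of_le_right h1
    have hlt : C3 - lam * C1 ≤ C1 := by nlinarith
    have hFC1 : F C1 = vm := by
      rw [hF, hvm, min_eq_right (max_le hA1C1 hlt)]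
    left
    rw [hFv, hFC1] at hfix
    exact hfix.symm
  · rcases le_or_gt w A1 with h2 | h2
    · -- F v = A1, F A1 = vp
      have hFv : F v = A1 := by
        rw [hF, max_eq_left h2, min_eq_right hA1C1]
      have hgt : A1 ≤ C3 - lam * A1 := by nlinarith
      have hFA1 : F A1 = vp := by
        rw [hF, hvp, max_eq_right hgt]
      right; right
      rw [hFv, hFA1] at hfix
      exact hfix.symm
    · -- A1 < w < C1, so F v = w
      have hFv : F v = w := by
        rw [hF, max_eq_right h2.le, min_eq_right h1.le]
      rw [hFv, hF] at hfix
      set u := C3 - lam * w with hu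
      rcases le_or_gt C1 u with h3 | h3
      · -- F w = C1, so v = C1 and vp = C1
        have hFw : min C1 (max A1 u) = C1 := by
          rw [min_eq_left]; exact le_max_of_le_right h3
        rw [hFw] at hfix
        right; right
        have : C1 ≤ C3 - lam * A1 := by nlinarith
        rw [hvp, min_eq_left this]
        exact hfix.symm
      · rcases le_or_gt u A1 with h4 | h4
        · -- F w = A1, so v = A1 and vm = A1
          have hFw : min C1 (max A1 u) = A1 := by
            rw [max_eq_left h4, min_eq_right hA1C1]
          rw [hFw] at hfix
          left
          have : C3 - lam * C1 ≤ A1 := by nlinarith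
          rw [hvm, max_eq_left this]
          exact hfix.symm
        · -- F w = u, interior fixed point
          have hFw : min C1 (max A1 u) = u := by
            rw [max_eq_right h4.le, min_eq_right h3.le]
          rw [hFw, hu, hw] at hfix
          right; left
          have h5 : (lam - 1) * ((lam + 1) * v - C3) = 0 := by
            linear_combination hfix
          have h6 : (lam + 1) * v = C3 := by
            rcases mul_eq_zero.mp h5 with h | h
            · linarith
            · linarith
          rw [hvs]
          linear_combination ξ * h6 - v * hξl
end

section
/- Let C1, C3 > 0, ξ ∈ (0, 1/2] with A1 < ξC3 < C1, λ = (1-ξ)/ξ ≥ 1, and F(v) = min(C1, max(A1, C3 - λv)). Then every solution of F⁴(v) = v in [A1, C1] already satisfies F²(v) = v; i.e., F has no periodic points of period 4. -/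
theorem poincare_no_period_four (C1 C3 ξ lam A1 : ℝ)
    (hC1 : 0 < C1) (hC3 : 0 < C3) (hξ0 : 0 < ξ) (hξ1 : ξ ≤ 1/2)
    (hA1 : A1 < ξ * C3) (hfp : ξ * C3 < C1) (hlam : lam = (1 - ξ) / ξ)
    (hlam1 : 1 ≤ lam)
    (F : ℝ → ℝ) (hF : ∀ v, F v = min C1 (max A1 (C3 - lam * v))) :
    ∀ v ∈ Set.Icc A1 C1, F (F (F (F v))) = v → F (F v) = v := by
  have hanti : ∀ v w : ℝ, v ≤ w → F w ≤ F v := by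
    intro v w hvw
    rw [hF, hF]
    apply min_le_min le_rfl
    apply max_le_max le_rfl
    have : lam * v ≤ lam * w := by nlinarith
    linarith
  have hmono : ∀ v w : ℝ, v ≤ w → F (F v) ≤ F (F w) := fun v w h =>
    hanti _ _ (hanti _ _ h)
  intro v _ h4
  rcases lt_trichotomy (F (F v)) v with hlt | heq | hgt
  · have := hmono _ _ hlt.le
    linarith
  · exact heq
  · have := hmono _ _ hgt.le
    linarith
end

section
/- Let ξ = β and A1 = max{C3-(1-ξ)C0, C3-C2, ξC3} with C3-C2 < ξC3 and C3-(1-ξ)C0 ≤ ξC3, so A1 = ξC3, and let ξC3 < C1, λ = (1-ξ)/ξ. Define F(v) = min(C1, max(ξC3, C3 - λv)). Then for every v ∈ [0, C1], F(F(v)) = ξC3; i.e., F converges to its fixed point ξC3 in at most two steps. -/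
/-!
The map `v ↦ min b (max a (c - lam * v))` takes all its values in `[a, b]`. When the decreasing
affine branch `v ↦ c - lam * v` already lies below `a` at `v = a`, it lies below `a` on all of
`[a, ∞)`, so the second iterate is clamped to `a`. In the theorem `a = ξ C3` is exactly the fixed
point of the branch `v ↦ C3 - (1 - ξ) / ξ * v`.
-/

section Clamp

variable {a b c lam : ℝ}

lemma le_min_max_of_le (hab : a ≤ b) (x : ℝ) : a ≤ min b (max a x) :=
  le_min hab (le_max_left a x)

lemma min_max_eq_of_le (hab : a ≤ b) {x : ℝ} (hx : x ≤ a) : min b (max a x) = a := by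
  rw [max_eq_left hx, min_eq_right hab]

theorem min_max_sub_mul_iterate_two (hab : a ≤ b) (hlam : 0 ≤ lam) (hfix : c - lam * a ≤ a)
    (v : ℝ) : min b (max a (c - lam * min b (max a (c - lam * v)))) = a := by
  refine min_max_eq_of_le hab ?_
  calc c - lam * min b (max a (c - lam * v)) ≤ c - lam * a := by
        gcongr; exact le_min_max_of_le hab _
    _ ≤ a := hfix

end Clamp

lemma one_sub_div_mul_mul_cancel {ξ : ℝ} (hξ : ξ ≠ 0) (C : ℝ) :
    (1 - ξ) / ξ * (ξ * C) = (1 - ξ) * C := by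
  field_simp

theorem poincare_finite_time_two_steps_general (C1 C3 ξ lam : ℝ)
    (hξ0 : 0 < ξ) (hξ1 : ξ < 1)
    (hfp : ξ * C3 < C1) (hlam : lam = (1 - ξ) / ξ)
    (F : ℝ → ℝ) (hF : ∀ v, F v = min C1 (max (ξ * C3) (C3 - lam * v))) :
    ∀ v ∈ Set.Icc (0 : ℝ) C1, F (F v) = ξ * C3 := by
  intro v _
  have hlam0 : 0 ≤ lam := hlam ▸ div_nonneg (by linarith) hξ0.le
  have hfix : C3 - lam * (ξ * C3) ≤ ξ * C3 := by
    rw [hlam, one_sub_div_mul_mul_cancel hξ0.ne']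
    linarith
  simp only [hF]
  exact min_max_sub_mul_iterate_two hfp.le hlam0 hfix v

theorem poincare_finite_time_two_steps (C0 C1 C2 C3 ξ β lam A1 : ℝ)
    (hξ0 : 0 < ξ) (hξ1 : ξ < 1) (hξβ : ξ = β)
    (hA1 : A1 = max (max (C3 - (1 - ξ) * C0) (C3 - C2)) (ξ * C3))
    (h1 : C3 - C2 < ξ * C3) (h2 : C3 - (1 - ξ) * C0 ≤ ξ * C3)
    (hA1eq : A1 = ξ * C3)
    (hfp : ξ * C3 < C1) (hlam : lam = (1 - ξ) / ξ)
    (F : ℝ → ℝ) (hF : ∀ v, F v = min C1 (max (ξ * C3) (C3 - lam * v))) :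
    ∀ v ∈ Set.Icc (0 : ℝ) C1, F (F v) = ξ * C3 :=
  poincare_finite_time_two_steps_general C1 C3 ξ lam hξ0 hξ1 hfp hlam F hF
end
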